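/- Exactly 27 K-types of the real group F₄₍₋₂₀₎ are u-small; that is, the set of quadruples (m₁,m₂,m₃,m₄) ∈ ℕ⁴ such that m₁ϖ₁+m₂ϖ₂+m₃ϖ₃+m₄ϖ₄ lies in the zonotope { Σ_{α ∈ Δ(p)} c_α α : 0 ≤ c_α ≤ 1 for each α ∈ Δ(p) } has exactly 27 elements. -/

import Mathlib

/-!
Index the noncompact roots by sign vectors `σ ∈ {±1}⁴`, as `σ/2`. Pairing a point
`Σ c_σ σ/2` (`0 ≤ c_σ ≤ 1`) of the zonotope with a linear functional `u` gives at most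
`Σ_σ max(⟨u, σ⟩/2, 0)`; for `u = e₁ + e₂` and `u = e₁ + e₂ + e₃ + e₄` this yields
`μ₁ + μ₂ ≤ 4` and `μ₁ + μ₂ + μ₃ + μ₄ ≤ 6` (coordinates are indexed from `0` in the code).

Conversely, the even sign vectors (`σ₁σ₂σ₃σ₄ = 1`) and the odd ones each form an orthogonal frame,
so the zonotope contains the sum of the cubes `{p : |⟨σ, p⟩| ≤ 2 for σ even}` and
`{q : |⟨σ, q⟩| ≤ 2 for σ odd}`. A dominant `μ` satisfying the two inequalities splits as
`(μ - q) + q` with `q = (α, β, β, β)` chosen greedily. Since `μ = Σ mᵢϖᵢ` is dominant, with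
`μ₁ + μ₂ = m₁ + 2m₂ + 2m₃ + m₄` and `Σ μᵢ = m₁ + 2m₂ + 3m₃ + 2m₄`, it remains to count the
solutions in `ℕ⁴` of these two inequalities.
-/

noncomputable section

namespace Stmt7

abbrev V4 : Type := EuclideanSpace ℝ (Fin 4)

def e (i : Fin 4) : V4 := EuclideanSpace.single i 1

def vec (a b c d : ℝ) : V4 := (WithLp.equiv 2 (Fin 4 → ℝ)).symm ![a, b, c, d]

/-- The root system of type `F₄` in `ℝ⁴`. -/
def ΔF4 : Set V4 :=
  {v | (∃ i, v = e i ∨ v = -e i) ∨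
       (∃ i j, i < j ∧ (v = e i + e j ∨ v = e i - e j ∨ v = -e i + e j ∨ v = -e i - e j)) ∨
       (∃ s : Fin 4 → ℝ, (∀ i, s i = 1 ∨ s i = -1) ∧ v = (1 / 2 : ℝ) • ∑ i, s i • e i)}

/-- The compact roots for F₄₍₋₂₀₎: the integral vectors of `ΔF4` (type B₄). -/
def Δk : Set V4 := {v ∈ ΔF4 | ∀ i, ∃ n : ℤ, v i = (n : ℝ)}

/-- The noncompact roots: the 16 vectors `(±e₁±e₂±e₃±e₄)/2`. -/
def Δp : Set V4 := ΔF4 \ Δk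

/-- The fundamental weights `ϖ₁=e₁, ϖ₂=e₁+e₂, ϖ₃=e₁+e₂+e₃, ϖ₄=(e₁+e₂+e₃+e₄)/2`. -/
def ϖ : Fin 4 → V4 :=
  ![vec 1 0 0 0, vec 1 1 0 0, vec 1 1 1 0, vec (1/2) (1/2) (1/2) (1/2)]

/-- The K-type `m₁ϖ₁ + m₂ϖ₂ + m₃ϖ₃ + m₄ϖ₄`. -/
def mu (m : Fin 4 → ℕ) : V4 := ∑ i, (m i : ℝ) • ϖ i

/-- `μ` is u-small: it lies in the zonotope
`{Σ_{α ∈ Δ(p)} c_α α : 0 ≤ c_α ≤ 1}`. -/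
def USmall (μ : V4) : Prop :=
  ∃ c : V4 → ℝ, (∀ α ∈ Δp, 0 ≤ c α ∧ c α ≤ 1) ∧ μ = ∑ᶠ α ∈ Δp, c α • α

lemma e_apply (i j : Fin 4) : e i j = if j = i then 1 else 0 := by
  simp [e, PiLp.single_apply]

lemma vec_apply (a b c d : ℝ) (j : Fin 4) : vec a b c d j = ![a, b, c, d] j := rfl

lemma half_sum_smul_e_apply (s : Fin 4 → ℝ) (j : Fin 4) :
    ((1 / 2 : ℝ) • ∑ i, s i • e i) j = s j / 2 := by
  simp [e_apply, div_eq_inv_mul]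

def halfSigned (σ : Fin 4 → ℤˣ) : V4 := (1 / 2 : ℝ) • ∑ i, ((σ i : ℤ) : ℝ) • e i

lemma halfSigned_apply (σ : Fin 4 → ℤˣ) (j : Fin 4) : halfSigned σ j = (σ j : ℤ) / 2 :=
  half_sum_smul_e_apply _ j

lemma halfSigned_injective : Function.Injective halfSigned := by
  intro σ τ h
  funext j
  simpa [halfSigned_apply, Units.ext_iff] using congrArg (fun v : V4 => v j) h

def integralVectors : AddSubgroup V4 :=
  { carrier := {v | ∀ i, ∃ n : ℤ, v i = n}
    add_mem' := fun ha hb i => by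
      obtain ⟨m, hm⟩ := ha i; obtain ⟨n, hn⟩ := hb i; exact ⟨m + n, by simp [hm, hn]⟩
    zero_mem' := fun _ => ⟨0, by simp⟩
    neg_mem' := fun ha i => by obtain ⟨m, hm⟩ := ha i; exact ⟨-m, by simp [hm]⟩ }

lemma e_mem_integralVectors (i : Fin 4) : e i ∈ integralVectors := fun j =>
  ⟨if j = i then 1 else 0, by rw [e_apply]; split_ifs <;> simp⟩

lemma Δp_eq_range_halfSigned : Δp = Set.range halfSigned := by
  ext v
  constructor
  · rintro ⟨hv, hvk⟩
    have he := e_mem_integralVectors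
    rcases hv with h | h | ⟨s, hs, rfl⟩
    · exfalso
      refine hvk ⟨Or.inl h, ?_⟩
      obtain ⟨i, rfl | rfl⟩ := h
      exacts [he i, neg_mem (he i)]
    · exfalso
      refine hvk ⟨Or.inr (Or.inl h), ?_⟩
      obtain ⟨i, j, -, rfl | rfl | rfl | rfl⟩ := h
      exacts [add_mem (he i) (he j), sub_mem (he i) (he j), add_mem (neg_mem (he i)) (he j),
        sub_mem (neg_mem (he i)) (he j)]
    · refine ⟨fun i => if s i = 1 then 1 else -1, ?_⟩
      ext j
      rw [halfSigned_apply, half_sum_smul_e_apply]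
      rcases hs j with h | h <;> norm_num [h]
  · rintro ⟨σ, rfl⟩
    refine ⟨Or.inr (Or.inr ⟨fun i => ((σ i : ℤ) : ℝ), fun i => ?_, rfl⟩), fun ⟨_, hint⟩ => ?_⟩
    · rcases Int.units_eq_one_or (σ i) with h | h <;> simp [h]
    · obtain ⟨n, hn⟩ := hint 0
      rw [halfSigned_apply] at hn
      have h2n : (σ 0 : ℤ) = 2 * n := by exact_mod_cast (by linarith : ((σ 0 : ℤ) : ℝ) = 2 * n)
      rcases Int.units_eq_one_or (σ 0) with h | h <;> simp [h] at h2n <;> omega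

lemma usmall_iff_exists_sum_halfSigned (μ : V4) :
    USmall μ ↔ ∃ c : (Fin 4 → ℤˣ) → ℝ, (∀ σ, c σ ∈ Set.Icc 0 1) ∧
      μ = ∑ σ, c σ • halfSigned σ := by
  simp only [USmall, Δp_eq_range_halfSigned, finsum_mem_range halfSigned_injective,
    finsum_eq_sum_of_fintype, Set.forall_mem_range, Set.mem_Icc]
  constructor
  · rintro ⟨c, hc, rfl⟩
    exact ⟨c ∘ halfSigned, hc, rfl⟩
  · rintro ⟨c, hc, rfl⟩
    refine ⟨Function.extend halfSigned c 0, ?_, ?_⟩ <;>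
      simp [halfSigned_injective.extend_apply, hc]

lemma sum_smul_halfSigned_apply (c : (Fin 4 → ℤˣ) → ℝ) (j : Fin 4) :
    (∑ σ, c σ • halfSigned σ) j = ∑ σ, c σ * (σ j : ℤ) / 2 := by
  simp [WithLp.ofLp_sum, halfSigned_apply, mul_div_assoc]

lemma USmall.sum_mul_le {μ : V4} (hμ : USmall μ) (u : Fin 4 → ℤ) :
    ∑ j, (u j : ℝ) * μ j ≤ ((∑ σ : Fin 4 → ℤˣ, max (∑ j, u j * (σ j : ℤ)) 0 : ℤ) : ℝ) / 2 := by
  obtain ⟨c, hc, rfl⟩ := (usmall_iff_exists_sum_halfSigned μ).1 hμ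
  simp only [sum_smul_halfSigned_apply, Finset.mul_sum]
  rw [Finset.sum_comm, Int.cast_sum, Finset.sum_div]
  refine Finset.sum_le_sum fun σ _ => ?_
  obtain ⟨hc0, hc1⟩ := hc σ
  have hcσ : c σ * (∑ j, (u j : ℝ) * (σ j : ℤ)) ≤ max (∑ j, (u j : ℝ) * (σ j : ℤ)) 0 := by
    rcases le_total 0 (∑ j, (u j : ℝ) * (σ j : ℤ)) with h | h
    · rw [max_eq_left h]; nlinarith
    · rw [max_eq_right h]; nlinarith
  push_cast
  calc ∑ j, (u j : ℝ) * (c σ * (σ j : ℤ) / 2) = c σ * (∑ j, (u j : ℝ) * (σ j : ℤ)) / 2 := by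
        rw [Finset.mul_sum, Finset.sum_div]; exact Finset.sum_congr rfl fun j _ => by ring
    _ ≤ _ := by gcongr

lemma USmall.partial_sums_le {μ : V4} (hμ : USmall μ) :
    μ 0 + μ 1 ≤ 4 ∧ μ 0 + μ 1 + μ 2 + μ 3 ≤ 6 := by
  have h₁ := hμ.sum_mul_le ![1, 1, 0, 0]
  have h₂ := hμ.sum_mul_le ![1, 1, 1, 1]
  rw [show (∑ σ : Fin 4 → ℤˣ, max (∑ j, ![1, 1, 0, 0] j * (σ j : ℤ)) 0) = 8 by decide] at h₁
  rw [show (∑ σ : Fin 4 → ℤˣ, max (∑ j, ![1, 1, 1, 1] j * (σ j : ℤ)) 0) = 12 by decide] at h₂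
  simp [Fin.sum_univ_four] at h₁ h₂
  constructor <;> linarith

lemma sum_signs_apply (j : Fin 4) : ∑ σ : Fin 4 → ℤˣ, (σ j : ℤ) = 0 := by
  revert j; decide

lemma sum_even_signs_mul (i j : Fin 4) :
    ∑ σ : Fin 4 → ℤˣ, (if ∏ k, σ k = 1 then (σ i : ℤ) * σ j else 0) = if i = j then 8 else 0 := by
  revert i j; decide

lemma sum_odd_signs_mul (i j : Fin 4) :
    ∑ σ : Fin 4 → ℤˣ, (if ∏ k, σ k = 1 then 0 else (σ i : ℤ) * σ j) = if i = j then 8 else 0 := by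
  revert i j; decide

lemma sum_signs_mul_split_apply (p q : V4) (j : Fin 4) :
    ∑ σ : Fin 4 → ℤˣ, (∑ i, ((σ i : ℤ) : ℝ) * if ∏ k, σ k = 1 then p i else q i) * (σ j : ℤ)
      = 8 * (p j + q j) := by
  have split : ∀ σ : Fin 4 → ℤˣ, ∀ i,
      ((σ i : ℤ) : ℝ) * (if ∏ k, σ k = 1 then p i else q i) * (σ j : ℤ)
        = ((if ∏ k, σ k = 1 then (σ i : ℤ) * σ j else 0 : ℤ) : ℝ) * p i
          + ((if ∏ k, σ k = 1 then 0 else (σ i : ℤ) * σ j : ℤ) : ℝ) * q i := fun σ i => by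
    split_ifs <;> push_cast <;> ring
  simp only [Finset.sum_mul, split, Finset.sum_add_distrib]
  rw [Finset.sum_comm, Finset.sum_comm (f := fun σ i => _ * q i)]
  simp only [← Finset.sum_mul, ← Int.cast_sum, sum_even_signs_mul, sum_odd_signs_mul]
  simp
  ring

/-- The coefficient of the root `σ/2` is `1/2 + ⟨σ, p⟩/4` for even `σ` and `1/2 + ⟨σ, q⟩/4`
for odd `σ`. -/
lemma usmall_add {p q : V4}
    (hp : ∀ σ : Fin 4 → ℤˣ, ∏ i, σ i = 1 → |∑ j, ((σ j : ℤ) : ℝ) * p j| ≤ 2)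
    (hq : ∀ σ : Fin 4 → ℤˣ, ∏ i, σ i ≠ 1 → |∑ j, ((σ j : ℤ) : ℝ) * q j| ≤ 2) :
    USmall (p + q) := by
  set g : (Fin 4 → ℤˣ) → ℝ := fun σ => ∑ i, ((σ i : ℤ) : ℝ) * if ∏ k, σ k = 1 then p i else q i
  have hg : ∀ σ, |g σ| ≤ 2 := fun σ => by
    by_cases h : ∏ k, σ k = 1
    · simpa [g, h] using hp σ h
    · simpa [g, h] using hq σ h
  rw [usmall_iff_exists_sum_halfSigned]
  refine ⟨fun σ => 1 / 2 + g σ / 4, fun σ => ?_, ?_⟩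
  · have := abs_le.1 (hg σ)
    constructor <;> linarith
  · ext j
    have hsigns : ∑ σ : Fin 4 → ℤˣ, ((σ j : ℤ) : ℝ) = 0 := by exact_mod_cast sum_signs_apply j
    calc (p + q) j = (∑ σ : Fin 4 → ℤˣ, ((σ j : ℤ) : ℝ)) / 4 + (∑ σ, g σ * (σ j : ℤ)) / 8 := by
          rw [hsigns, sum_signs_mul_split_apply]; simp
      _ = _ := by
          rw [sum_smul_halfSigned_apply, Finset.sum_div, Finset.sum_div, ← Finset.sum_add_distrib]
          exact Finset.sum_congr rfl fun σ _ => by ring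

/-- The split `x = (x - q) + q` with `q = ((T + D)/2, (T - D)/2, (T - D)/2, (T - D)/2)`: the six
hypotheses are the conditions of `usmall_add`. -/
lemma usmall_of_split (x : V4) (D T : ℝ)
    (h₁ : |x 0 + x 1 + x 2 + x 3 - 2 * T + D| ≤ 2) (h₂ : |x 0 + x 1 - x 2 - x 3 - D| ≤ 2)
    (h₃ : |x 0 - x 1 + x 2 - x 3 - D| ≤ 2) (h₄ : |x 0 - x 1 - x 2 + x 3 - D| ≤ 2)
    (h₅ : |T| ≤ 2) (h₆ : |T - 2 * D| ≤ 2) : USmall x := by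
  set q := vec ((T + D) / 2) ((T - D) / 2) ((T - D) / 2) ((T - D) / 2)
  rw [show x = (x - q) + q by abel]
  rw [abs_le] at h₁ h₂ h₃ h₄ h₅ h₆
  apply usmall_add <;> intro σ hσ <;>
    rcases Int.units_eq_one_or (σ 0) with h0 | h0 <;>
    rcases Int.units_eq_one_or (σ 1) with h1 | h1 <;>
    rcases Int.units_eq_one_or (σ 2) with h2 | h2 <;>
    rcases Int.units_eq_one_or (σ 3) with h3 | h3 <;>
    simp [Fin.prod_univ_four, Fin.sum_univ_four, h0, h1, h2, h3, q, vec_apply] at hσ ⊢ <;>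
    rw [abs_le] <;> constructor <;> linarith

theorem usmall_iff_of_dominant {x : V4} (h₀₁ : x 1 ≤ x 0) (h₁₂ : x 2 ≤ x 1) (h₂₃ : x 3 ≤ x 2)
    (h₃ : 0 ≤ x 3) : USmall x ↔ x 0 + x 1 ≤ 4 ∧ x 0 + x 1 + x 2 + x 3 ≤ 6 := by
  refine ⟨USmall.partial_sums_le, fun ⟨hA, hB⟩ => ?_⟩
  set D := max (x 0 + x 1 - x 2 - x 3 - 2) 0
  set T := min 2 ((x 0 + x 1 + x 2 + x 3 + D) / 2)
  apply usmall_of_split x D T <;> rw [abs_le] <;>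
    rcases max_cases (x 0 + x 1 - x 2 - x 3 - 2) 0 with ⟨hD, hD'⟩ | ⟨hD, hD'⟩ <;>
    rcases min_cases 2 ((x 0 + x 1 + x 2 + x 3 + D) / 2) with ⟨hT, hT'⟩ | ⟨hT, hT'⟩ <;>
    constructor <;> linarith

lemma mu_eq_vec (m : Fin 4 → ℕ) :
    mu m = vec (m 0 + m 1 + m 2 + m 3 / 2) (m 1 + m 2 + m 3 / 2) (m 2 + m 3 / 2) (m 3 / 2) := by
  ext j
  fin_cases j <;> simp [mu, ϖ, vec_apply, Fin.sum_univ_four] <;> ring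

lemma usmall_mu_iff (m : Fin 4 → ℕ) :
    USmall (mu m) ↔ m 0 + 2 * m 1 + 2 * m 2 + m 3 ≤ 4 ∧ m 0 + 2 * m 1 + 3 * m 2 + 2 * m 3 ≤ 6 := by
  rw [mu_eq_vec, usmall_iff_of_dominant] <;> simp [vec_apply]
  · rw [← Nat.cast_le (α := ℝ), ← Nat.cast_le (α := ℝ)]
    push_cast
    constructor <;> rintro ⟨h₁, h₂⟩ <;> constructor <;> linarith
  · positivity

/-- Exactly 27 K-types `m₁ϖ₁+m₂ϖ₂+m₃ϖ₃+m₄ϖ₄` (with `(m₁,m₂,m₃,m₄) ∈ ℕ⁴`) of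
F₄₍₋₂₀₎ are u-small. -/
theorem usmall_count_FII :
    {m : Fin 4 → ℕ | USmall (mu m)}.ncard = 27 := by
  have : {m : Fin 4 → ℕ | USmall (mu m)} =
      ↑((Fintype.piFinset fun _ : Fin 4 => Finset.range 5).filter fun m =>
        m 0 + 2 * m 1 + 2 * m 2 + m 3 ≤ 4 ∧ m 0 + 2 * m 1 + 3 * m 2 + 2 * m 3 ≤ 6) := by
    ext m
    simp only [Set.mem_ofPred_eq, usmall_mu_iff, Finset.coe_filter, Fintype.mem_piFinset,
      Finset.mem_range]
    refine ⟨fun h => ⟨fun i => ?_, h⟩, And.right⟩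
    fin_cases i <;> simp <;> omega
  rw [this, Set.ncard_coe_finset]
  decide

end Stmt7
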